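/- For any finite DAG G with adjacency matrix A and any estimated DAG Ĝ on the same vertex set, the topological divergence of any topological order π̂ of Ĝ with respect to A is at most the structural Hamming distance between G and Ĝ; in particular D_top(π̂, A) is bounded above by the number of edges of G that are absent or reversed in Ĝ. -/
import Mathlib


/-- For finite DAGs `G`, `Ĝ` on the same vertex set and `π̂` a topological
order of `Ĝ`, the topological divergence `D_top(π̂, G)` is at most the structural Hamming
distance between `G` and `Ĝ` (ordered pairs where the edge relations differ); in particular
it is at most the number of edges of `G` that are absent or reversed in `Ĝ`. -/
theorem stmt_8 {V : Type*} [Fintype V] (G Ghat : V → V → Prop)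
    (hG : ∀ v, ¬ Relation.TransGen G v v) (hGhat : ∀ v, ¬ Relation.TransGen Ghat v v)
    (π : V ≃ Fin (Fintype.card V)) (hπ : ∀ u v, Ghat u v → π u < π v) :
    {p : V × V | G p.1 p.2 ∧ π p.2 < π p.1}.ncard ≤
        {p : V × V | ¬ (G p.1 p.2 ↔ Ghat p.1 p.2)}.ncard ∧
    {p : V × V | G p.1 p.2 ∧ π p.2 < π p.1}.ncard ≤
        {p : V × V | G p.1 p.2 ∧ (¬ Ghat p.1 p.2 ∨ Ghat p.2 p.1)}.ncard := by
  have key : ∀ p : V × V, G p.1 p.2 ∧ π p.2 < π p.1 → ¬ Ghat p.1 p.2 := by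
    rintro ⟨u, v⟩ ⟨hg, hlt⟩ hhat
    exact absurd (hπ u v hhat) (not_lt.2 hlt.le)
  constructor
  · refine Set.ncard_le_ncard (fun p hp => ?_) (Set.toFinite _)
    have := key p hp
    simp only [Set.mem_setOf_eq] at hp ⊢
    tauto
  · refine Set.ncard_le_ncard (fun p hp => ?_) (Set.toFinite _)
    have := key p hp
    simp only [Set.mem_setOf_eq] at hp ⊢
    tauto
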